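/- arXiv:2101.00516 — 2 statements merged into one kernel-verified Lean document; each statement's English description precedes it below -/
import Mathlib

section
/- The normalization constants satisfy the ratio identity C_{q₁}/C_q = 2(2-q)^{3/2}/(5-3q), where q₁ = 1/(2-q) and 1 ≤ q < 5/3. -/
open MeasureTheory

/-- q-exponential (with cutoff), reducing to exp at q = 1. -/
noncomputable def qExp (q x : ℝ) : ℝ :=
  if q = 1 then Real.exp x else (max 0 (1 + (1 - q) * x)) ^ (1 / (1 - q))

/-- Normalizing constant C_q = ∫ e_q(-x²) dx. -/
noncomputable def Cq (q : ℝ) : ℝ := ∫ x : ℝ, qExp q (-(x ^ 2))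

/-- q-Gaussian density N_q(m,σ²) with β = 1/(3-q). -/
noncomputable def qGauss (q m σ x : ℝ) : ℝ :=
  Real.sqrt (1 / (3 - q)) / (σ * Cq q) * qExp q (-((1 / (3 - q)) * (x - m) ^ 2 / σ ^ 2))

/-!
Substituting `p = 1 + 1/s` turns `e_p(-x²)` into `(1 + x²/s)^(-s)`, so after rescaling
`C_{1+1/s} = √s · J(s)` with `J(s) = ∫ (1 + x²)^(-s) dx`. Integrating the derivative of
`x (1 + x²)^(-s)` over `ℝ` gives `(2s - 1) J(s) = 2s J(s + 1)`. For `1 < q < 5/3` we have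
`q₁ = 1 + 1/t` and `q = 1 + 1/(t+1)` with `t = (2 - q)/(q - 1) > 1/2`, so the ratio is
`√(t/(t+1)) · 2t/(2t - 1) = √(2 - q) · 2(2 - q)/(5 - 3q)`. For `q = 1` both sides are `1`.
-/

open Real Filter Topology

noncomputable def oneAddSqRpowIntegral (s : ℝ) : ℝ := ∫ x : ℝ, (1 + x ^ 2) ^ (-s)

section OneAddSqRpow

variable {s : ℝ}

lemma integrable_one_add_sq_rpow_neg (hs : 1 / 2 < s) :
    Integrable fun x : ℝ => (1 + x ^ 2) ^ (-s) := by
  have h := integrable_rpow_neg_one_add_norm_sq (E := ℝ) (μ := volume)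
    (r := 2 * s) (by simp only [Module.finrank_self, Nat.cast_one]; linarith)
  convert h using 3 with x
  rw [Real.norm_eq_abs, sq_abs]
  ring_nf

lemma oneAddSqRpowIntegral_pos (hs : 1 / 2 < s) : 0 < oneAddSqRpowIntegral s :=
  (integral_pos_iff_support_of_nonneg (fun x => by positivity)
    (integrable_one_add_sq_rpow_neg hs)).2 <| by
      rw [Function.support_eq_univ fun x => by positivity]
      simp

lemma integral_one_add_sq_div_rpow_neg {a : ℝ} (ha : 0 < a) (s : ℝ) :
    ∫ x : ℝ, (1 + x ^ 2 / a) ^ (-s) = √a * oneAddSqRpowIntegral s := by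
  have h := Measure.integral_comp_div (fun y : ℝ => (1 + y ^ 2) ^ (-s)) √a
  simp only [div_pow, sq_sqrt ha.le, abs_of_nonneg (sqrt_nonneg a), smul_eq_mul] at h
  exact h

lemma hasDerivAt_mul_one_add_sq_rpow_neg (x : ℝ) :
    HasDerivAt (fun x : ℝ => x * (1 + x ^ 2) ^ (-s))
      ((1 - 2 * s) * (1 + x ^ 2) ^ (-s) + 2 * s * (1 + x ^ 2) ^ (-(s + 1))) x := by
  have hpos : (0 : ℝ) < 1 + x ^ 2 := by positivity
  have hinner : HasDerivAt (fun x : ℝ => 1 + x ^ 2) (2 * x) x := by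
    simpa using (hasDerivAt_pow 2 x).const_add 1
  refine ((hasDerivAt_id x).mul (hinner.rpow_const (p := -s) (Or.inl hpos.ne'))).congr_deriv ?_
  have hsplit : (1 + x ^ 2) ^ (-s) = (1 + x ^ 2) ^ (-(s + 1)) * (1 + x ^ 2) := by
    rw [← rpow_add_one hpos.ne']; ring_nf
  rw [show -s - 1 = -(s + 1) by ring, hsplit]
  simp only [id_eq]
  ring

lemma tendsto_mul_one_add_sq_rpow_neg_atTop (hs : 1 / 2 < s) :
    Tendsto (fun x : ℝ => x * (1 + x ^ 2) ^ (-s)) atTop (𝓝 0) := by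
  refine squeeze_zero' ?_ ?_ (tendsto_rpow_neg_atTop (y := 2 * s - 1) (by linarith))
  · filter_upwards [eventually_ge_atTop 0] with x hx
    positivity
  · filter_upwards [eventually_gt_atTop 0] with x hx
    calc x * (1 + x ^ 2) ^ (-s) ≤ x * (x ^ 2) ^ (-s) := by
          gcongr ?_ * ?_
          exact rpow_le_rpow_of_nonpos (by positivity) (by linarith) (by linarith)
      _ = x ^ (-(2 * s - 1)) := by
          rw [← rpow_natCast, ← rpow_mul hx.le, show -(2 * s - 1) = 1 + 2 * -s by ring,
            rpow_add hx, rpow_one]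
          push_cast; ring_nf

lemma tendsto_mul_one_add_sq_rpow_neg_atBot (hs : 1 / 2 < s) :
    Tendsto (fun x : ℝ => x * (1 + x ^ 2) ^ (-s)) atBot (𝓝 0) := by
  simpa [Function.comp_def] using
    ((tendsto_mul_one_add_sq_rpow_neg_atTop hs).comp tendsto_neg_atBot_atTop).neg

lemma oneAddSqRpowIntegral_recurrence (hs : 1 / 2 < s) :
    (2 * s - 1) * oneAddSqRpowIntegral s = 2 * s * oneAddSqRpowIntegral (s + 1) := by
  have hint := (integrable_one_add_sq_rpow_neg hs).const_mul (1 - 2 * s)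
  have hint' := (integrable_one_add_sq_rpow_neg (s := s + 1) (by linarith)).const_mul (2 * s)
  have h := integral_of_hasDerivAt_of_tendsto hasDerivAt_mul_one_add_sq_rpow_neg (hint.add hint')
    (tendsto_mul_one_add_sq_rpow_neg_atBot hs) (tendsto_mul_one_add_sq_rpow_neg_atTop hs)
  rw [integral_add hint hint', integral_const_mul, integral_const_mul] at h
  unfold oneAddSqRpowIntegral
  linarith

lemma oneAddSqRpowIntegral_div_add_one (hs : 1 / 2 < s) :
    oneAddSqRpowIntegral s / oneAddSqRpowIntegral (s + 1) = 2 * s / (2 * s - 1) := by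
  rw [div_eq_div_iff (oneAddSqRpowIntegral_pos (by linarith)).ne' (by linarith)]
  linear_combination oneAddSqRpowIntegral_recurrence hs

end OneAddSqRpow

lemma qExp_one_add_inv_neg_sq {s : ℝ} (hs : 0 < s) (x : ℝ) :
    qExp (1 + 1 / s) (-(x ^ 2)) = (1 + x ^ 2 / s) ^ (-s) := by
  have hbase : 1 + (1 - (1 + 1 / s)) * -(x ^ 2) = 1 + x ^ 2 / s := by ring
  have hexp : 1 / (1 - (1 + 1 / s)) = -s := by field_simp; ring
  rw [qExp, if_neg (by simp [hs.ne']), hbase, hexp, max_eq_right (by positivity)]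

lemma Cq_one_add_inv {s : ℝ} (hs : 0 < s) : Cq (1 + 1 / s) = √s * oneAddSqRpowIntegral s := by
  simp only [Cq, qExp_one_add_inv_neg_sq hs]
  exact integral_one_add_sq_div_rpow_neg hs s

lemma Cq_one : Cq 1 = √π := by
  simpa [Cq, qExp] using integral_gaussian 1

lemma Cq_one_add_inv_div {t : ℝ} (ht : 1 / 2 < t) :
    Cq (1 + 1 / t) / Cq (1 + 1 / (t + 1)) = √(t / (t + 1)) * (2 * t / (2 * t - 1)) := by
  rw [Cq_one_add_inv (by linarith), Cq_one_add_inv (by linarith), mul_div_mul_comm,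
    ← sqrt_div' _ (by linarith), oneAddSqRpowIntegral_div_add_one ht]

theorem Cq_ratio (q : ℝ) (hq1 : 1 ≤ q) (hq : q < 5 / 3) :
    Cq (1 / (2 - q)) / Cq q = 2 * (2 - q) ^ ((3 : ℝ) / 2) / (5 - 3 * q) := by
  rcases hq1.eq_or_lt with rfl | hq_gt
  · norm_num [Cq_one, (sqrt_pos.2 pi_pos).ne']
  have hq_sub : q - 1 ≠ 0 := by linarith
  have h2q : 0 < 2 - q := by linarith
  obtain ⟨t, ht⟩ : ∃ t, t = (2 - q) / (q - 1) := ⟨_, rfl⟩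
  have ht_half : 1 / 2 < t := by rw [ht, lt_div_iff₀ (by linarith)]; linarith
  have hq₁ : 1 / (2 - q) = 1 + 1 / t := by rw [ht]; field_simp; ring
  have hq_eq : q = 1 + 1 / (t + 1) := by rw [ht]; field_simp; ring
  have hsqrt : t / (t + 1) = 2 - q := by rw [ht]; field_simp; ring
  have hfrac : 2 * t / (2 * t - 1) = 2 * (2 - q) / (5 - 3 * q) := by
    rw [ht, div_eq_div_iff (by linarith) (by linarith)]; field_simp; ring
  have hratio := Cq_one_add_inv_div ht_half
  rw [← hq₁, ← hq_eq, hsqrt, hfrac] at hratio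
  rw [hratio, show (3 : ℝ) / 2 = 1 + 1 / 2 by norm_num,
    rpow_add h2q, rpow_one, ← sqrt_eq_rpow]
  ring
end

section
/- If X follows the q-Gaussian N_q(m, σ²) with density f and 1 ≤ q < 3, then the escort distribution f_q(x) = f(x)^q / ∫ f(t)^q dt is the density of a q₃-Gaussian N_{q₃}(m, σ₃²) with q₃ = (2q-1)/q and σ₃² = ((3-q)/(q+1))σ². Consequently, the normalized q-mean ∫ x f_q(x) dx equals m. -/
/-!
Since `1 - q₃ = (1 - q) / q`, the `q`-exponential satisfies `e_q(y) ^ q = e_{q₃}(q y)`.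
Hence `f ^ q` is a constant multiple of the `q₃`-Gaussian centred at `m` whose rate `β₃ / σ₃²`
equals `q β / σ²`; both that density and the escort density integrate to `1`, so they coincide.
The mean is `m` because the `q₃`-Gaussian is symmetric about `m` and, as `q₃ < 2`, its tails
decay like `|x| ^ (-2 / (q₃ - 1))`, fast enough for a first moment.
-/

open MeasureTheory

open Real

theorem Function.Odd.integral_eq_zero {G E : Type*} [MeasurableSpace G] [AddGroup G]
    [MeasurableNeg G] [NormedAddCommGroup E] [NormedSpace ℝ E] {f : G → E} (hf : f.Odd)
    (μ : Measure G) [μ.IsNegInvariant] : ∫ x, f x ∂μ = 0 := by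
  have h := integral_neg_eq_self f μ
  simp only [hf _, integral_neg] at h
  have h2 : (2 : ℝ) • ∫ x, f x ∂μ = 0 := by
    rw [two_smul]; nth_rewrite 1 [← h]; exact neg_add_cancel _
  exact (smul_eq_zero.mp h2).resolve_left two_ne_zero

theorem integral_mul_comp_sub_of_even {h : ℝ → ℝ} (heven : h.Even) (hint : Integrable h)
    (hint_mul : Integrable fun u ↦ u * h u) (m : ℝ) :
    ∫ x, x * h (x - m) = m * ∫ u, h u := by
  have hodd : (fun u ↦ u * h u).Odd := fun u ↦ by simp [heven u]
  calc ∫ x, x * h (x - m) = ∫ x, (fun u ↦ u * h u + m * h u) (x - m) := by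
        congr 1; ext x; ring
    _ = ∫ u, (u * h u + m * h u) :=
        integral_sub_right_eq_self (μ := volume) (fun u ↦ u * h u + m * h u) m
    _ = m * ∫ u, h u := by
        rw [integral_add hint_mul (hint.const_mul m), hodd.integral_eq_zero, integral_const_mul,
          zero_add]

theorem div_integral_eq_of_eq_const_mul {α : Type*} [MeasurableSpace α] {μ : Measure α}
    {F G : α → ℝ} {c : ℝ} (hc : c ≠ 0) (hFG : ∀ x, F x = c * G x) (hG : ∫ x, G x ∂μ = 1)
    (x : α) : F x / ∫ y, F y ∂μ = G x := by
  simp only [hFG, integral_const_mul, hG, mul_one]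
  field_simp

theorem integrable_one_add_mul_sq_rpow_neg {a p : ℝ} (ha : 0 < a) (hp : 1 / 2 < p) :
    Integrable fun x : ℝ ↦ (1 + a * x ^ 2) ^ (-p) := by
  have h := (integrable_rpow_neg_one_add_norm_sq (E := ℝ) (μ := volume) (r := 2 * p)
    (by rw [Module.finrank_self, Nat.cast_one]; linarith)).comp_mul_left' (sqrt_pos.mpr ha).ne'
  refine h.congr (Filter.Eventually.of_forall fun x ↦ ?_)
  simp only [norm_eq_abs, sq_abs, mul_pow, sq_sqrt ha.le]
  ring_nf

theorem integrable_mul_one_add_mul_sq_rpow_neg {a p : ℝ} (ha : 0 < a) (hp : 1 < p) :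
    Integrable fun x : ℝ ↦ x * (1 + a * x ^ 2) ^ (-p) := by
  refine ((integrable_one_add_mul_sq_rpow_neg ha (p := p - 1 / 2) (by linarith)).const_mul
    (sqrt a)⁻¹).mono' (by fun_prop) (Filter.Eventually.of_forall fun x ↦ ?_)
  have hb : 0 < 1 + a * x ^ 2 := by positivity
  have habs : |x| ≤ (sqrt a)⁻¹ * (1 + a * x ^ 2) ^ (1 / 2 : ℝ) := by
    rw [← sqrt_eq_rpow, le_inv_mul_iff₀ (sqrt_pos.mpr ha), ← sqrt_sq_eq_abs, ← sqrt_mul ha.le]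
    exact sqrt_le_sqrt (by linarith)
  calc ‖x * (1 + a * x ^ 2) ^ (-p)‖ = |x| * (1 + a * x ^ 2) ^ (-p) := by
        rw [norm_mul, norm_eq_abs, norm_of_nonneg (rpow_pos_of_pos hb _).le]
    _ ≤ (sqrt a)⁻¹ * (1 + a * x ^ 2) ^ (1 / 2 : ℝ) * (1 + a * x ^ 2) ^ (-p) := by gcongr
    _ = (sqrt a)⁻¹ * (1 + a * x ^ 2) ^ (-(p - 1 / 2)) := by
        rw [mul_assoc, ← rpow_add hb]; ring_nf

theorem qExp_nonneg (q x : ℝ) : 0 ≤ qExp q x := by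
  unfold qExp
  split_ifs
  exacts [(exp_pos x).le, rpow_nonneg (le_max_left _ _) _]

theorem qExp_neg_eq_rpow {q y : ℝ} (hq : 1 < q) (hy : 0 ≤ y) :
    qExp q (-y) = (1 + (q - 1) * y) ^ (-(q - 1)⁻¹) := by
  have hbase : 1 + (1 - q) * -y = 1 + (q - 1) * y := by ring
  have hexp : 1 / (1 - q) = -(q - 1)⁻¹ := by rw [← inv_neg, neg_sub, one_div]
  rw [qExp, if_neg hq.ne', hbase, hexp, max_eq_right (by nlinarith)]

theorem qExp_neg_pos {q y : ℝ} (hq : 1 ≤ q) (hy : 0 ≤ y) : 0 < qExp q (-y) := by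
  rcases hq.eq_or_lt with rfl | hq
  · simpa [qExp] using exp_pos _
  · rw [qExp_neg_eq_rpow hq hy]
    exact rpow_pos_of_pos (by nlinarith) _

theorem qExp_rpow (q x : ℝ) : qExp q x ^ q = qExp ((2 * q - 1) / q) (q * x) := by
  rcases eq_or_ne q 0 with rfl | hq0
  · simp [qExp]
  rcases eq_or_ne q 1 with rfl | hq1
  · norm_num
  have hq' : (2 * q - 1) / q ≠ 1 := by
    rw [Ne, div_eq_one_iff_eq hq0]; exact fun h ↦ hq1 (by linarith)
  have hsub : 1 - (2 * q - 1) / q = (1 - q) / q := by field_simp; ring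
  have hbase : 1 + (1 - (2 * q - 1) / q) * (q * x) = 1 + (1 - q) * x := by
    rw [hsub]; field_simp
  have hexp : 1 / (1 - q) * q = 1 / (1 - (2 * q - 1) / q) := by
    rw [hsub, one_div_div]; ring
  rw [qExp, if_neg hq1, qExp, if_neg hq', hbase, ← hexp, rpow_mul (le_max_left _ _)]

theorem integrable_qExp_neg_mul_sq {q a : ℝ} (hq1 : 1 ≤ q) (hq3 : q < 3) (ha : 0 < a) :
    Integrable fun x : ℝ ↦ qExp q (-(a * x ^ 2)) := by
  rcases hq1.eq_or_lt with rfl | hq1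
  · simpa [qExp] using integrable_exp_neg_mul_sq ha
  have hp : 1 / 2 < (q - 1)⁻¹ := by
    rw [lt_inv_comm₀ (by norm_num) (by linarith)]; linarith
  refine (integrable_one_add_mul_sq_rpow_neg (by positivity : 0 < (q - 1) * a) hp).congr
    (Filter.Eventually.of_forall fun x ↦ ?_)
  dsimp only
  rw [qExp_neg_eq_rpow hq1 (by positivity), mul_assoc]

theorem integrable_mul_qExp_neg_mul_sq {q a : ℝ} (hq1 : 1 ≤ q) (hq2 : q < 2) (ha : 0 < a) :
    Integrable fun x : ℝ ↦ x * qExp q (-(a * x ^ 2)) := by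
  rcases hq1.eq_or_lt with rfl | hq1
  · simpa [qExp] using integrable_mul_exp_neg_mul_sq ha
  have hp : 1 < (q - 1)⁻¹ := by
    rw [lt_inv_comm₀ (by norm_num) (by linarith)]; linarith
  refine (integrable_mul_one_add_mul_sq_rpow_neg (by positivity : 0 < (q - 1) * a) hp).congr
    (Filter.Eventually.of_forall fun x ↦ ?_)
  dsimp only
  rw [qExp_neg_eq_rpow hq1 (by positivity), mul_assoc]

theorem integral_qExp_neg_mul_sq (q : ℝ) {a : ℝ} (ha : 0 < a) :
    ∫ x : ℝ, qExp q (-(a * x ^ 2)) = (sqrt a)⁻¹ * Cq q := by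
  have h : ∀ x, a * x ^ 2 = (sqrt a * x) ^ 2 := fun x ↦ by rw [mul_pow, sq_sqrt ha.le]
  simp_rw [h]
  rw [Measure.integral_comp_mul_left (fun y ↦ qExp q (-(y ^ 2))), Cq, smul_eq_mul,
    abs_of_pos (inv_pos.mpr (sqrt_pos.mpr ha))]

theorem Cq_pos {q : ℝ} (hq1 : 1 ≤ q) (hq3 : q < 3) : 0 < Cq q := by
  have hint := integrable_qExp_neg_mul_sq hq1 hq3 one_pos
  simp only [one_mul] at hint
  have hsupp : Function.support (fun x : ℝ ↦ qExp q (-(x ^ 2))) = Set.univ :=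
    Set.eq_univ_of_forall fun x ↦ (qExp_neg_pos hq1 (sq_nonneg x)).ne'
  rw [Cq, integral_pos_iff_support_of_nonneg (fun x ↦ qExp_nonneg _ _) hint, hsupp]
  simp

theorem qGauss_eq_mul_qExp (q m σ x : ℝ) :
    qGauss q m σ x =
      sqrt (1 / (3 - q)) / (σ * Cq q) * qExp q (-(1 / (3 - q) / σ ^ 2 * (x - m) ^ 2)) := by
  rw [qGauss, mul_div_right_comm]

theorem integral_qGauss {q σ : ℝ} (hq1 : 1 ≤ q) (hq3 : q < 3) (hσ : 0 < σ) (m : ℝ) :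
    ∫ x, qGauss q m σ x = 1 := by
  have hβ : 0 < 1 / (3 - q) := one_div_pos.mpr (by linarith)
  have hC := Cq_pos hq1 hq3
  simp_rw [qGauss_eq_mul_qExp]
  rw [integral_const_mul,
    integral_sub_right_eq_self (μ := volume) (fun u ↦ qExp q (-(1 / (3 - q) / σ ^ 2 * u ^ 2))) m,
    integral_qExp_neg_mul_sq q (by positivity), sqrt_div' _ (sq_nonneg σ), sqrt_sq hσ.le]
  have := sqrt_pos.mpr hβ
  field_simp

theorem integral_mul_qGauss {q σ : ℝ} (hq1 : 1 ≤ q) (hq2 : q < 2) (hσ : 0 < σ) (m : ℝ) :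
    ∫ x, x * qGauss q m σ x = m := by
  have hshift : ∀ x, qGauss q m σ x = qGauss q 0 σ (x - m) := fun x ↦ by simp [qGauss]
  have heven : (qGauss q 0 σ).Even := fun u ↦ by simp [qGauss]
  have ha : 0 < 1 / (3 - q) / σ ^ 2 := div_pos (one_div_pos.mpr (by linarith)) (by positivity)
  have hint : Integrable (qGauss q 0 σ) := by
    simp_rw [funext (qGauss_eq_mul_qExp q 0 σ), sub_zero]
    exact (integrable_qExp_neg_mul_sq hq1 (by linarith) ha).const_mul _
  have hint_mul : Integrable fun u ↦ u * qGauss q 0 σ u := by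
    simp_rw [qGauss_eq_mul_qExp q 0 σ, sub_zero, mul_left_comm _ (sqrt _ / _)]
    exact (integrable_mul_qExp_neg_mul_sq hq1 hq2 ha).const_mul _
  simp_rw [hshift]
  rw [integral_mul_comp_sub_of_even heven hint hint_mul, integral_qGauss hq1 (by linarith) hσ,
    mul_one]

theorem one_le_two_mul_sub_one_div {q : ℝ} (hq : 1 ≤ q) : 1 ≤ (2 * q - 1) / q := by
  rw [le_div_iff₀ (by linarith)]; linarith

theorem two_mul_sub_one_div_lt_two {q : ℝ} (hq : 0 < q) : (2 * q - 1) / q < 2 := by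
  rw [div_lt_iff₀ hq]; linarith

theorem sqrt_div_mul_pos {q σ : ℝ} (hq1 : -1 < q) (hq3 : q < 3) (hσ : 0 < σ) :
    0 < sqrt ((3 - q) / (q + 1)) * σ :=
  mul_pos (sqrt_pos.mpr (div_pos (by linarith) (by linarith))) hσ

theorem exists_rpow_qGauss_eq_mul {q σ : ℝ} (hq1 : 1 ≤ q) (hq3 : q < 3) (hσ : 0 < σ) (m : ℝ) :
    ∃ c ≠ 0, ∀ x, qGauss q m σ x ^ q =
      c * qGauss ((2 * q - 1) / q) m (sqrt ((3 - q) / (q + 1)) * σ) x := by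
  set q' := (2 * q - 1) / q with hq'
  set σ' := sqrt ((3 - q) / (q + 1)) * σ
  have hq0 : 0 < q := by linarith
  have h3q : 0 < 3 - q := by linarith
  have hq'1 : 1 ≤ q' := one_le_two_mul_sub_one_div hq1
  have hq'3 : q' < 3 := (two_mul_sub_one_div_lt_two hq0).trans (by norm_num)
  have hσ' : 0 < σ' := sqrt_div_mul_pos (by linarith) hq3 hσ
  have h3q' : 3 - q' = (q + 1) / q := by simp only [q']; field_simp; ring
  have hrate : 1 / (3 - q') / σ' ^ 2 = q * (1 / (3 - q) / σ ^ 2) := by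
    rw [h3q', mul_pow, sq_sqrt (by positivity)]
    field_simp
  have hA : 0 < sqrt (1 / (3 - q)) / (σ * Cq q) := by
    have := Cq_pos hq1 hq3
    have : 0 < sqrt (1 / (3 - q)) := sqrt_pos.mpr (by positivity)
    positivity
  have hA' : 0 < sqrt (1 / (3 - q')) / (σ' * Cq q') := by
    have := Cq_pos hq'1 hq'3
    have : 0 < sqrt (1 / (3 - q')) := sqrt_pos.mpr (by rw [h3q']; positivity)
    positivity
  refine ⟨(sqrt (1 / (3 - q)) / (σ * Cq q)) ^ q / (sqrt (1 / (3 - q')) / (σ' * Cq q')),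
    (div_pos (rpow_pos_of_pos hA q) hA').ne', fun x ↦ ?_⟩
  rw [qGauss_eq_mul_qExp, qGauss_eq_mul_qExp, mul_rpow hA.le (qExp_nonneg _ _), qExp_rpow, ← hq',
    hrate, mul_neg, ← mul_assoc, ← mul_assoc, div_mul_cancel₀ _ hA'.ne']

theorem qGauss_escort (q m σ : ℝ) (hq1 : 1 ≤ q) (hq3 : q < 3) (hσ : 0 < σ) :
    (∀ x : ℝ, (qGauss q m σ x) ^ q / (∫ t : ℝ, (qGauss q m σ t) ^ q) =
      qGauss ((2 * q - 1) / q) m (Real.sqrt ((3 - q) / (q + 1)) * σ) x) ∧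
    (∫ x : ℝ, x * ((qGauss q m σ x) ^ q / (∫ t : ℝ, (qGauss q m σ t) ^ q))) = m := by
  obtain ⟨c, hc, hpow⟩ := exists_rpow_qGauss_eq_mul hq1 hq3 hσ m
  have hq'1 := one_le_two_mul_sub_one_div hq1
  have hq'2 := two_mul_sub_one_div_lt_two (q := q) (by linarith)
  have hσ' := sqrt_div_mul_pos (by linarith) hq3 hσ
  have hescort := div_integral_eq_of_eq_const_mul hc hpow
    (integral_qGauss hq'1 (by linarith) hσ' m)
  refine ⟨hescort, ?_⟩
  simp_rw [hescort]
  exact integral_mul_qGauss hq'1 hq'2 hσ' m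
end
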